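/- For distinct propositional variables Y and Z, neither Y ⊢ Z nor Z ⊢ Y holds in atomic System F with primitive disjunction (NI²∨_at). -/
import Mathlib


/-- Formulas of second-order propositional logic with primitive disjunction:
variables, ⊃, ∨, ∀. -/
inductive Fm : Type
  | var : ℕ → Fm
  | imp : Fm → Fm → Fm
  | or  : Fm → Fm → Fm
  | all : ℕ → Fm → Fm
deriving DecidableEq

namespace Fm

/-- `Free X A`: the variable `X` occurs free in `A`. -/
def Free (X : ℕ) : Fm → Prop
  | var Y => X = Y
  | imp A B => Free X A ∨ Free X B
  | or A B => Free X A ∨ Free X B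
  | all Y A => X ≠ Y ∧ Free X A

/-- Substitution of `C` for the free occurrences of `X`. -/
def subst (X : ℕ) (C : Fm) : Fm → Fm
  | var Y => if X = Y then C else var Y
  | imp A B => imp (subst X C A) (subst X C B)
  | or A B => or (subst X C A) (subst X C B)
  | all Y A => if X = Y then all Y A else all Y (subst X C A)

/-- `C` is substitutable (free) for `X` in the given formula (no capture). -/
def FreeFor (C : Fm) (X : ℕ) : Fm → Prop
  | var _ => True
  | imp A B => FreeFor C X A ∧ FreeFor C X B
  | or A B => FreeFor C X A ∧ FreeFor C X B
  | all Y A => (¬ Free X (all Y A)) ∨ (¬ Free Y C ∧ FreeFor C X A)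

end Fm

/-- Natural deduction for second-order propositional logic with primitive
disjunction (the system `NI²∨`).  When `atomic = true` the witness of
∀-elimination must be a variable: this is the system `NI²∨_at`. -/
inductive Deriv (atomic : Bool) : Set Fm → Fm → Prop
  | ax {Γ A} : A ∈ Γ → Deriv atomic Γ A
  | impI {Γ A B} : Deriv atomic (insert A Γ) B → Deriv atomic Γ (.imp A B)
  | impE {Γ A B} : Deriv atomic Γ (.imp A B) → Deriv atomic Γ A → Deriv atomic Γ B
  | orI1 {Γ A B} : Deriv atomic Γ A → Deriv atomic Γ (.or A B)
  | orI2 {Γ A B} : Deriv atomic Γ B → Deriv atomic Γ (.or A B)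
  | orE {Γ A B C} : Deriv atomic Γ (.or A B) →
      Deriv atomic (insert A Γ) C → Deriv atomic (insert B Γ) C →
      Deriv atomic Γ C
  | allI {Γ X A} : Deriv atomic Γ A → (∀ B ∈ Γ, ¬ Fm.Free X B) →
      Deriv atomic Γ (.all X A)
  | allE {Γ X A C} : Deriv atomic Γ (.all X A) → Fm.FreeFor C X A →
      (atomic = true → ∃ Y, C = Fm.var Y) →
      Deriv atomic Γ (Fm.subst X C A)

section Semantics

/-- Classical two-valued evaluation; `∀` quantifies over Bool values. -/
def eval : (ℕ → Bool) → Fm → Prop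
  | g, .var n => g n = true
  | g, .imp A B => eval g A → eval g B
  | g, .or A B => eval g A ∨ eval g B
  | g, .all X A => ∀ d, eval (Function.update g X d) A

lemma subst_id {X : ℕ} {C A : Fm} (h : ¬ Fm.Free X A) : Fm.subst X C A = A := by
  induction A with
  | var n =>
    simp only [Fm.Free] at h
    simp [Fm.subst, h]
  | imp A B ihA ihB =>
    simp only [Fm.Free] at h
    push_neg at h
    simp [Fm.subst, ihA h.1, ihB h.2]
  | or A B ihA ihB =>
    simp only [Fm.Free] at h
    push_neg at h
    simp [Fm.subst, ihA h.1, ihB h.2]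
  | all Y A ih =>
    simp only [Fm.Free] at h
    push_neg at h
    by_cases hXY : X = Y
    · simp [Fm.subst, hXY]
    · simp [Fm.subst, hXY, ih (h hXY)]

lemma eval_congr {A : Fm} {g g' : ℕ → Bool}
    (h : ∀ n, Fm.Free n A → g n = g' n) : eval g A ↔ eval g' A := by
  induction A generalizing g g' with
  | var n => simp [eval, h n rfl]
  | imp A B ihA ihB =>
    simp only [eval]
    rw [ihA (fun n hn => h n (Or.inl hn)), ihB (fun n hn => h n (Or.inr hn))]
  | or A B ihA ihB =>
    simp only [eval]
    rw [ihA (fun n hn => h n (Or.inl hn)), ihB (fun n hn => h n (Or.inr hn))]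
  | all X A ih =>
    simp only [eval]
    apply forall_congr'
    intro d
    apply ih
    intro n hn
    by_cases hnX : n = X
    · subst hnX; rw [Function.update_self, Function.update_self]
    · rw [Function.update_of_ne hnX, Function.update_of_ne hnX]
      exact h n ⟨hnX, hn⟩

lemma eval_subst_var {X W : ℕ} {A : Fm} {g : ℕ → Bool}
    (hff : Fm.FreeFor (Fm.var W) X A) :
    eval g (Fm.subst X (Fm.var W) A) ↔ eval (Function.update g X (g W)) A := by
  induction A generalizing g with
  | var n =>
    by_cases hXn : X = n
    · subst hXn; simp [Fm.subst, eval]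
    · simp [Fm.subst, hXn, eval, Function.update, dif_neg (Ne.symm hXn)]
  | imp A B ihA ihB =>
    obtain ⟨h1, h2⟩ := hff
    simp only [Fm.subst, eval, ihA h1, ihB h2]
  | or A B ihA ihB =>
    obtain ⟨h1, h2⟩ := hff
    simp only [Fm.subst, eval, ihA h1, ihB h2]
  | all Y A ih =>
    by_cases hXY : X = Y
    · subst hXY
      simp only [Fm.subst, if_pos rfl, eval]
      constructor <;> intro h d <;> [rw [Function.update_idem] at *; skip] <;>
        first
          | exact h d
          | (have := h d; rwa [Function.update_idem] at this)
    · rcases hff with hnf | ⟨hYW, hffA⟩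
      · simp only [Fm.Free, not_and] at hnf
        have hnfA : ¬ Fm.Free X A := hnf hXY
        rw [subst_id (by exact fun hc => hnfA hc.2 : ¬ Fm.Free X (Fm.all Y A))]
        apply eval_congr
        intro n hn
        have hnX : n ≠ X := by
          rintro rfl
          exact hnfA hn.2
        simp [Function.update, dif_neg hnX]
      · have hWY : W ≠ Y := fun h => hYW h.symm
        simp only [Fm.subst, if_neg hXY, eval]
        constructor <;> intro h d
        · have := (ih hffA).mp (h d)
          rwa [Function.update_of_ne hWY, Function.update_comm (Ne.symm hXY)] at this
        · rw [ih hffA, Function.update_of_ne hWY, Function.update_comm (Ne.symm hXY)]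
          exact h d

lemma sound {Γ : Set Fm} {A : Fm} (h : Deriv true Γ A) :
    ∀ g : ℕ → Bool, (∀ B ∈ Γ, eval g B) → eval g A := by
  induction h with
  | ax hm => exact fun g hg => hg _ hm
  | impI _ ih =>
    intro g hg hA
    exact ih g (by rintro B (rfl | hB); exact hA; exact hg _ hB)
  | impE _ _ ih1 ih2 => exact fun g hg => (ih1 g hg) (ih2 g hg)
  | orI1 _ ih => exact fun g hg => Or.inl (ih g hg)
  | orI2 _ ih => exact fun g hg => Or.inr (ih g hg)
  | orE _ _ _ ih ihl ihr =>
    intro g hg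
    rcases ih g hg with hA | hB
    · exact ihl g (by rintro B (rfl | hB); exact hA; exact hg _ hB)
    · exact ihr g (by rintro B (rfl | hB); exact hB; exact hg _ hB)
  | @allI Γ X A _ hfree ih =>
    intro g hg d
    apply ih
    intro B hB
    rw [eval_congr (g' := g)]
    · exact hg _ hB
    · intro n hn
      have hnX : n ≠ X := fun he => hfree B hB (he ▸ hn)
      rw [Function.update_of_ne hnX]
  | allE _ hff hat ih =>
    intro g hg
    obtain ⟨W, rfl⟩ := hat rfl
    rw [eval_subst_var hff]
    exact ih g hg _

end Semantics

/-- For distinct propositional variables `Y`, `Z`, neither `Y ⊢ Z` nor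
`Z ⊢ Y` holds in `NI²∨_at`. -/
theorem distinct_vars_not_interderivable (Y Z : ℕ) (hYZ : Y ≠ Z) :
    ¬ Deriv true {Fm.var Y} (.var Z) ∧ ¬ Deriv true {Fm.var Z} (.var Y) := by
  constructor
  · intro h
    have := sound h (fun n => if n = Y then true else false)
      (by rintro B rfl; simp [eval])
    simp [eval, if_neg (Ne.symm hYZ)] at this
  · intro h
    have := sound h (fun n => if n = Z then true else false)
      (by rintro B rfl; simp [eval])
    simp [eval, if_neg hYZ] at this
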